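/- arXiv:1203.0089 — 4 statements merged into one kernel-verified Lean document; each statement's English description precedes it below -/
import Mathlib

section
/- Let t > 0, k ∈ ℝ, k ≠ 0, and let M = k(A* − A) on L²([0,t),ℂ) where A is the Volterra operator and A* its adjoint. Consider the block operator T(f₁,f₂) = (M f₂, −M f₁) on L²([0,t),ℂ)². If λ ≠ 0 and (e₁,e₂) is an eigenvector of T with eigenvalue λ and e₁, e₂ are twice continuously differentiable, then e₁'' + (4k²/λ²) e₁ = 0 and e₂'' + (4k²/λ²) e₂ = 0. -/
open MeasureTheory Set

/-! Differentiating the eigenvalue equations turns `T e = λ e` into the first-order system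
`λ e₁' = -2k e₂`, `λ e₂' = 2k e₁`, since `d/ds (∫ₛᵗ f - ∫₀ˢ f) = -2 f(s)`. Differentiating once
more and substituting one equation into the other gives `λ² e₁'' = -4k² e₁`, and likewise for `e₂`.
Both sides of each equation are known only on `[0,t)`, where derivatives are still unique
(one-sided at `0`). -/

theorem HasDerivAt.eq_of_eqOn_Ico {E : Type*} [NormedAddCommGroup E] [NormedSpace ℝ E]
    {f g : ℝ → E} {f' g' : E} {a b s : ℝ} (hf : HasDerivAt f f' s) (hg : HasDerivAt g g' s)
    (hfg : EqOn f g (Ico a b)) (hs : s ∈ Ico a b) : f' = g' :=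
  (uniqueDiffOn_Ico a b s hs).eq_deriv _ hf.hasDerivWithinAt
    (hg.hasDerivWithinAt.congr hfg (hfg hs))

theorem hasDerivAt_integral_sub_integral {E : Type*} [NormedAddCommGroup E] [NormedSpace ℝ E]
    [CompleteSpace E] {f : ℝ → E} (hf : Continuous f) (a b x : ℝ) :
    HasDerivAt (fun x => (∫ τ in x..b, f τ) - ∫ τ in a..x, f τ) (-f x - f x) x :=
  (intervalIntegral.integral_hasDerivAt_left (hf.intervalIntegrable x b)
      (hf.stronglyMeasurableAtFilter _ _) hf.continuousAt).sub
    (hf.integral_hasStrictDerivAt a x).hasDerivAt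

theorem mul_deriv_eq_of_eqOn_Ico_integral_sub_integral {a b : ℝ} {c lam : ℂ} {f g : ℝ → ℂ}
    (hf : Differentiable ℝ f) (hg : Continuous g)
    (h : ∀ x ∈ Ico a b, c * ((∫ τ in x..b, g τ) - ∫ τ in a..x, g τ) = lam * f x) :
    ∀ s ∈ Ico a b, lam * deriv f s = -2 * c * g s := by
  intro s hs
  have key := ((hf s).hasDerivAt.const_mul lam).eq_of_eqOn_Ico
    ((hasDerivAt_integral_sub_integral hg a b s).const_mul c) (fun x hx => (h x hx).symm) hs
  linear_combination key

theorem deriv_deriv_add_mul_eq_zero_of_eqOn_Ico {a b : ℝ} {lam c : ℂ} (hlam : lam ≠ 0)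
    {u v : ℝ → ℂ} (hu : Differentiable ℝ (deriv u)) (hv : Differentiable ℝ v)
    (huv : ∀ x ∈ Ico a b, lam * deriv u x = c * v x)
    (hvu : ∀ x ∈ Ico a b, lam * deriv v x = -c * u x) :
    ∀ s ∈ Ico a b, deriv (deriv u) s + c ^ 2 / lam ^ 2 * u s = 0 := by
  intro s hs
  have hu'' : lam * deriv (deriv u) s = c * deriv v s :=
    ((hu s).hasDerivAt.const_mul lam).eq_of_eqOn_Ico ((hv s).hasDerivAt.const_mul c) huv hs
  field_simp
  linear_combination lam * hu'' + c * hvu s hs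

theorem stmt_2_general (t k : ℝ) (lam : ℂ) (hlam : lam ≠ 0)
    (e₁ e₂ : ℝ → ℂ) (he₁ : ContDiff ℝ 2 e₁) (he₂ : ContDiff ℝ 2 e₂)
    (heig1 : ∀ s ∈ Set.Ico (0:ℝ) t,
      (k:ℂ) * ((∫ τ in s..t, e₂ τ) - ∫ τ in (0:ℝ)..s, e₂ τ) = lam * e₁ s)
    (heig2 : ∀ s ∈ Set.Ico (0:ℝ) t,
      -((k:ℂ) * ((∫ τ in s..t, e₁ τ) - ∫ τ in (0:ℝ)..s, e₁ τ)) = lam * e₂ s) :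
    ∀ s ∈ Set.Ico (0:ℝ) t,
      deriv (deriv e₁) s + (4*(k:ℂ)^2/lam^2) * e₁ s = 0 ∧
      deriv (deriv e₂) s + (4*(k:ℂ)^2/lam^2) * e₂ s = 0 := by
  have hd₁ : Differentiable ℝ e₁ := he₁.differentiable (by norm_num)
  have hd₂ : Differentiable ℝ e₂ := he₂.differentiable (by norm_num)
  have he₁' : ∀ x ∈ Ico 0 t, lam * deriv e₁ x = -2 * k * e₂ x :=
    mul_deriv_eq_of_eqOn_Ico_integral_sub_integral hd₁ he₂.continuous heig1
  have he₂' : ∀ x ∈ Ico 0 t, lam * deriv e₂ x = -2 * -k * e₁ x :=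
    mul_deriv_eq_of_eqOn_Ico_integral_sub_integral hd₂ he₁.continuous
      (fun x hx => by rw [← heig2 x hx, neg_mul])
  intro s hs
  constructor
  · have h := deriv_deriv_add_mul_eq_zero_of_eqOn_Ico hlam he₁.differentiable_deriv_two hd₂
      he₁' (fun x hx => by rw [he₂' x hx]; ring) s hs
    linear_combination h
  · have h := deriv_deriv_add_mul_eq_zero_of_eqOn_Ico hlam he₂.differentiable_deriv_two hd₁
      he₂' (fun x hx => by rw [he₁' x hx]; ring) s hs
    linear_combination h

/-- If `(e₁,e₂)` is a twice continuously differentiable eigenvector with eigenvalue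
`λ ≠ 0` of the block operator `T(f₁,f₂) = (M f₂, -M f₁)`, `M = k(A* - A)`, then
`e₁'' + (4k²/λ²)e₁ = 0` and `e₂'' + (4k²/λ²)e₂ = 0` on `[0,t)`. -/
theorem stmt_2 (t k : ℝ) (ht : 0 < t) (hk : k ≠ 0) (lam : ℂ) (hlam : lam ≠ 0)
    (e₁ e₂ : ℝ → ℂ) (he₁ : ContDiff ℝ 2 e₁) (he₂ : ContDiff ℝ 2 e₂)
    (hne : ¬(∀ s ∈ Set.Ico (0:ℝ) t, e₁ s = 0 ∧ e₂ s = 0))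
    (heig1 : ∀ s ∈ Set.Ico (0:ℝ) t,
      (k:ℂ) * ((∫ τ in s..t, e₂ τ) - ∫ τ in (0:ℝ)..s, e₂ τ) = lam * e₁ s)
    (heig2 : ∀ s ∈ Set.Ico (0:ℝ) t,
      -((k:ℂ) * ((∫ τ in s..t, e₁ τ) - ∫ τ in (0:ℝ)..s, e₁ τ)) = lam * e₂ s) :
    ∀ s ∈ Set.Ico (0:ℝ) t,
      deriv (deriv e₁) s + (4*(k:ℂ)^2/lam^2) * e₁ s = 0 ∧
      deriv (deriv e₂) s + (4*(k:ℂ)^2/lam^2) * e₂ s = 0 :=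
  stmt_2_general t k lam hlam e₁ e₂ he₁ he₂ heig1 heig2
end

section
/- Let t > 0, k ∈ ℝ, k ≠ 0, n ∈ ℤ, and set λₙ = 2kt/((2n−1)π). Define e₁(s) = cos(2ks/λₙ), e₂(s) = sin(2ks/λₙ) on [0,t). Then with M = k(A* − A) as above, M e₂ = λₙ e₁ and −M e₁ = λₙ e₂, i.e. (e₁,e₂) is an eigenvector of the block operator T(f₁,f₂)=(Mf₂,−Mf₁) with eigenvalue λₙ. -/
open Real MeasureTheory

/-!
With `c = 2k/λₙ` we have `c t = (2n-1)π`, so `t` is a half-period of `cos (c ·)` and `sin (c ·)`: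
`cos (c t) = -1` and `sin (c t) = 0`. Integrating, `c (∫ₛᵗ sin (cτ) - ∫₀ˢ sin (cτ)) = 2 cos (c s)` and
`c (∫ₛᵗ cos (cτ) - ∫₀ˢ cos (cτ)) = -2 sin (c s)`; multiplying by `λₙ/2` and using `λₙ c = 2k` gives
both eigen-relations.
-/

theorem Real.cos_two_mul_int_sub_one_mul_pi (n : ℤ) : cos ((2 * n - 1) * π) = -1 := by
  rw [← Real.cos_int_mul_two_pi_sub_pi n]
  ring_nf

theorem Real.sin_two_mul_int_sub_one_mul_pi (n : ℤ) : sin ((2 * n - 1) * π) = 0 := by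
  exact_mod_cast Real.sin_int_mul_pi (2 * n - 1)

theorem mul_integral_sin_mul (c a b : ℝ) :
    c * ∫ x in a..b, sin (c * x) = cos (c * a) - cos (c * b) := by
  rw [intervalIntegral.mul_integral_comp_mul_left, integral_sin]

theorem mul_integral_cos_mul (c a b : ℝ) :
    c * ∫ x in a..b, cos (c * x) = sin (c * b) - sin (c * a) := by
  rw [intervalIntegral.mul_integral_comp_mul_left, integral_cos]

theorem mul_integral_sin_mul_sub_of_cos_eq_neg_one {c t : ℝ} (hct : cos (c * t) = -1) (s : ℝ) :
    c * ((∫ x in s..t, sin (c * x)) - ∫ x in (0 : ℝ)..s, sin (c * x)) = 2 * cos (c * s) := by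
  rw [mul_sub, mul_integral_sin_mul, mul_integral_sin_mul, hct, mul_zero, cos_zero]
  ring

theorem mul_integral_cos_mul_sub_of_sin_eq_zero {c t : ℝ} (hct : sin (c * t) = 0) (s : ℝ) :
    c * ((∫ x in s..t, cos (c * x)) - ∫ x in (0 : ℝ)..s, cos (c * x)) = -2 * sin (c * s) := by
  rw [mul_sub, mul_integral_cos_mul, mul_integral_cos_mul, hct, mul_zero, sin_zero]
  ring

/-- With `λₙ = 2kt/((2n-1)π)`, the pair `(cos(2k·/λₙ), sin(2k·/λₙ))` is an eigenvector
with eigenvalue `λₙ` of the block operator `T(f₁,f₂) = (M f₂, -M f₁)`,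
where `(Mf)(s) = k(∫_s^t f - ∫_0^s f)`. -/
theorem stmt_3 (t k : ℝ) (ht : 0 < t) (hk : k ≠ 0) (n : ℤ)
    (lam : ℝ) (hlam : lam = 2*k*t/((2*(n:ℝ) - 1)*π)) :
    ∀ s ∈ Set.Ico (0:ℝ) t,
      (k * ((∫ τ in s..t, Real.sin (2*k*τ/lam)) - ∫ τ in (0:ℝ)..s, Real.sin (2*k*τ/lam))
        = lam * Real.cos (2*k*s/lam)) ∧
      (-(k * ((∫ τ in s..t, Real.cos (2*k*τ/lam)) - ∫ τ in (0:ℝ)..s, Real.cos (2*k*τ/lam)))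
        = lam * Real.sin (2*k*s/lam)) := by
  intro s _
  have hodd : (2 * (n : ℝ) - 1) ≠ 0 := by exact_mod_cast (by omega : 2 * n - 1 ≠ 0)
  have hlam0 : lam ≠ 0 := hlam ▸ div_ne_zero (by positivity) (mul_ne_zero hodd pi_ne_zero)
  set c := 2 * k / lam with hc
  have hct : c * t = (2 * n - 1) * π := by rw [hc, hlam]; field_simp
  have hkc : k = lam * c / 2 := by rw [hc]; field_simp
  have harg (τ : ℝ) : 2 * k * τ / lam = c * τ := by rw [hc]; ring
  simp_rw [harg]
  have hsin := mul_integral_sin_mul_sub_of_cos_eq_neg_one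
    (hct ▸ Real.cos_two_mul_int_sub_one_mul_pi n) s
  have hcos := mul_integral_cos_mul_sub_of_sin_eq_zero
    (hct ▸ Real.sin_two_mul_int_sub_one_mul_pi n) s
  constructor
  · linear_combination (lam / 2) * hsin
      + ((∫ x in s..t, sin (c * x)) - ∫ x in (0 : ℝ)..s, sin (c * x)) * hkc
  · linear_combination -(lam / 2) * hcos
      - ((∫ x in s..t, cos (c * x)) - ∫ x in (0 : ℝ)..s, cos (c * x)) * hkc
end

section
/- Let t > 0, k ∈ ℝ with cos(2kt) ≠ −1, and define on [0,t): f₁(s) = i cos(2ks) + i (sin(2kt)/(cos(2kt)+1)) sin(2ks) and f₂(s) = i (sin(2kt)/(cos(2kt)+1)) cos(2ks) − i sin(2ks). Then with M f(s) = k(∫₀^s f(τ)dτ − ∫_s^t f(τ)dτ), the pair (f₁,f₂) satisfies −i f₁(s) + i M f₂(s) = 1 and −i M f₁(s) − i f₂(s) = 0 for all s ∈ [0,t). -/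
/-!
With `c = sin(2kt) / (cos(2kt) + 1)` (that is, `c = tan(kt)`), both `f₁` and `f₂` are of the form
`α cos(2ks) + β sin(2ks)`, so `Mf` is computed in closed form from the antiderivative
`(α sin(2kτ) - β cos(2kτ)) / (2k)`; the factor `k` in `M` cancels the `1/(2k)`, so no case
distinction on `k = 0` is needed. After substitution, both equations reduce to the half-angle
identities `c · sin(2kt) = 1 - cos(2kt)` and `c · (cos(2kt) + 1) = sin(2kt)`.
-/

open MeasureTheory Complex

lemma hasDerivAt_trig_antideriv (α β : ℂ) (θ x : ℝ) :
    HasDerivAt (fun τ : ℝ => α * Real.sin (θ * τ) - β * Real.cos (θ * τ))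
      (θ * (α * Real.cos (θ * x) + β * Real.sin (θ * x))) x := by
  have hsin := (((hasDerivAt_id x).const_mul θ).sin).ofReal_comp
  have hcos := (((hasDerivAt_id x).const_mul θ).cos).ofReal_comp
  refine ((hsin.const_mul α).sub (hcos.const_mul β)).congr_deriv ?_
  simp only [id, mul_one]
  push_cast
  ring

lemma mul_integral_trig (α β : ℂ) (θ a b : ℝ) :
    θ * ∫ τ in a..b, (α * Real.cos (θ * τ) + β * Real.sin (θ * τ)) =
      (α * Real.sin (θ * b) - β * Real.cos (θ * b)) -
        (α * Real.sin (θ * a) - β * Real.cos (θ * a)) := by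
  rw [← intervalIntegral.integral_const_mul]
  exact intervalIntegral.integral_eq_sub_of_hasDerivAt
    (fun x _ => hasDerivAt_trig_antideriv α β θ x) (Continuous.intervalIntegrable (by fun_prop) _ _)

/-- The operator `M = k (A - A*)` of the statement, `A` being the Volterra operator on `[0, t)`. -/
noncomputable def skewVolterra (k t : ℝ) (f : ℝ → ℂ) (s : ℝ) : ℂ :=
  k * ((∫ τ in (0:ℝ)..s, f τ) - ∫ τ in s..t, f τ)

lemma skewVolterra_trig (α β : ℂ) (k t s : ℝ) :
    skewVolterra k t (fun τ => α * Real.cos (2 * k * τ) + β * Real.sin (2 * k * τ)) s =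
      (α * (2 * Real.sin (2 * k * s) - Real.sin (2 * k * t)) +
        β * (1 - 2 * Real.cos (2 * k * s) + Real.cos (2 * k * t))) / 2 := by
  have h₀ := mul_integral_trig α β (2 * k) 0 s
  have h₁ := mul_integral_trig α β (2 * k) s t
  simp only [mul_zero, Real.sin_zero, Real.cos_zero] at h₀
  simp only [ofReal_mul, ofReal_ofNat, ofReal_zero, ofReal_one] at h₀ h₁
  rw [skewVolterra]
  linear_combination (h₀ - h₁) / 2

lemma div_cos_add_one_mul_sin {x : ℝ} (h : Real.cos x ≠ -1) :
    Real.sin x / (Real.cos x + 1) * Real.sin x = 1 - Real.cos x := by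
  have hne : Real.cos x + 1 ≠ 0 := fun h' => h (eq_neg_of_add_eq_zero_left h')
  rw [div_mul_eq_mul_div, div_eq_iff hne]
  linear_combination Real.sin_sq_add_cos_sq x

theorem stmt_7_general (t k : ℝ) (hcos : Real.cos (2*k*t) ≠ -1)
    (f₁ f₂ : ℝ → ℂ)
    (hf₁ : ∀ s, f₁ s = Complex.I * (Real.cos (2*k*s) : ℂ) +
      Complex.I * ((Real.sin (2*k*t) / (Real.cos (2*k*t) + 1) : ℝ) : ℂ) * (Real.sin (2*k*s) : ℂ))
    (hf₂ : ∀ s, f₂ s = Complex.I * ((Real.sin (2*k*t) / (Real.cos (2*k*t) + 1) : ℝ) : ℂ) *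
      (Real.cos (2*k*s) : ℂ) - Complex.I * (Real.sin (2*k*s) : ℂ)) :
    ∀ s ∈ Set.Ico (0:ℝ) t,
      (-Complex.I * f₁ s +
        Complex.I * ((k:ℂ) * ((∫ τ in (0:ℝ)..s, f₂ τ) - ∫ τ in s..t, f₂ τ)) = 1) ∧
      (-Complex.I * ((k:ℂ) * ((∫ τ in (0:ℝ)..s, f₁ τ) - ∫ τ in s..t, f₁ τ)) -
        Complex.I * f₂ s = 0) := by
  intro s _
  set c : ℝ := Real.sin (2*k*t) / (Real.cos (2*k*t) + 1)
  have hc_sin : (c : ℂ) * Real.sin (2*k*t) = 1 - Real.cos (2*k*t) := by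
    exact_mod_cast div_cos_add_one_mul_sin hcos
  have hc_cos : (c : ℂ) * (Real.cos (2*k*t) + 1) = Real.sin (2*k*t) := by
    exact_mod_cast div_mul_cancel₀ _ fun h => hcos (eq_neg_of_add_eq_zero_left h)
  have hf₁' : f₁ = fun τ => I * Real.cos (2*k*τ) + I * c * Real.sin (2*k*τ) := funext hf₁
  have hf₂' : f₂ = fun τ => I * c * Real.cos (2*k*τ) + (-I) * Real.sin (2*k*τ) := by
    funext τ
    rw [hf₂, neg_mul, ← sub_eq_add_neg]
  have hM₁ := skewVolterra_trig I (I * c) k t s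
  have hM₂ := skewVolterra_trig (I * c) (-I) k t s
  rw [← hf₁', skewVolterra] at hM₁
  rw [← hf₂', skewVolterra] at hM₂
  rw [hM₁, hM₂, hf₁ s, hf₂ s]
  constructor
  · linear_combination
      -(1 + c * Real.sin (2*k*t) + Real.cos (2*k*t)) / 2 * I_sq + hc_sin / 2
  · linear_combination
      (Real.sin (2*k*t) - c * (1 + Real.cos (2*k*t))) / 2 * I_sq + hc_cos / 2

/-- The explicit pair `(f₁,f₂)` is the preimage of `(𝟙_{[0,t)}, 0)` under the operator
`N = -i·[[Id, -M],[M, Id]]`: with `Mf(s) = k(∫_0^s f - ∫_s^t f)` one has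
`-i f₁(s) + i (M f₂)(s) = 1` and `-i (M f₁)(s) - i f₂(s) = 0` on `[0,t)`. -/
theorem stmt_7 (t k : ℝ) (ht : 0 < t) (hcos : Real.cos (2*k*t) ≠ -1)
    (f₁ f₂ : ℝ → ℂ)
    (hf₁ : ∀ s, f₁ s = Complex.I * (Real.cos (2*k*s) : ℂ) +
      Complex.I * ((Real.sin (2*k*t) / (Real.cos (2*k*t) + 1) : ℝ) : ℂ) * (Real.sin (2*k*s) : ℂ))
    (hf₂ : ∀ s, f₂ s = Complex.I * ((Real.sin (2*k*t) / (Real.cos (2*k*t) + 1) : ℝ) : ℂ) *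
      (Real.cos (2*k*s) : ℂ) - Complex.I * (Real.sin (2*k*s) : ℂ)) :
    ∀ s ∈ Set.Ico (0:ℝ) t,
      (-Complex.I * f₁ s +
        Complex.I * ((k:ℂ) * ((∫ τ in (0:ℝ)..s, f₂ τ) - ∫ τ in s..t, f₂ τ)) = 1) ∧
      (-Complex.I * ((k:ℂ) * ((∫ τ in (0:ℝ)..s, f₁ τ) - ∫ τ in s..t, f₁ τ)) -
        Complex.I * f₂ s = 0) :=
  stmt_7_general t k hcos f₁ f₂ hf₁ hf₂
end

section
/- Let t > 0, k ∈ ℝ, k ≠ 0. Suppose f₁, f₂ ∈ L²([0,t),ℝ) satisfy f₁(s) = k∫₀^s f₂(τ)dτ − k∫_s^t f₂(τ)dτ and f₂(s) = k∫_s^t f₁(τ)dτ − k∫₀^s f₁(τ)dτ for a.e. s ∈ [0,t), and additionally kt/π ∉ ℤ + 1/2 (i.e. cos(kt) ≠ 0). Then f₁ = 0 and f₂ = 0 almost everywhere. -/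
open MeasureTheory

/-- Triviality of the kernel of the block operator `N₂ = [[Id, M],[-M, Id]]` with
`M = k(A - A*)` on `L²([0,t),ℝ)²`, provided `kt/π ∉ ℤ + 1/2`. -/
theorem stmt_9 (t k : ℝ) (ht : 0 < t) (hk : k ≠ 0)
    (hres : ∀ n : ℤ, k*t/Real.pi ≠ (n:ℝ) + 1/2)
    (f₁ f₂ : ℝ → ℝ)
    (hf₁ : MemLp f₁ 2 (MeasureTheory.volume.restrict (Set.Ico (0:ℝ) t)))
    (hf₂ : MemLp f₂ 2 (MeasureTheory.volume.restrict (Set.Ico (0:ℝ) t)))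
    (heq1 : ∀ᵐ s ∂(MeasureTheory.volume.restrict (Set.Ico (0:ℝ) t)),
      f₁ s = k * (∫ τ in (0:ℝ)..s, f₂ τ) - k * ∫ τ in s..t, f₂ τ)
    (heq2 : ∀ᵐ s ∂(MeasureTheory.volume.restrict (Set.Ico (0:ℝ) t)),
      f₂ s = k * (∫ τ in s..t, f₁ τ) - k * ∫ τ in (0:ℝ)..s, f₁ τ) :
    (∀ᵐ s ∂(MeasureTheory.volume.restrict (Set.Ico (0:ℝ) t)), f₁ s = 0) ∧
    (∀ᵐ s ∂(MeasureTheory.volume.restrict (Set.Ico (0:ℝ) t)), f₂ s = 0) := by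
  haveI : IsFiniteMeasure (volume.restrict (Set.Ico (0:ℝ) t)) :=
    ⟨by rw [Measure.restrict_apply_univ]; exact measure_Ico_lt_top⟩
  have hi₁ : IntegrableOn f₁ (Set.Ico (0:ℝ) t) volume := hf₁.integrable one_le_two
  have hi₂ : IntegrableOn f₂ (Set.Ico (0:ℝ) t) volume := hf₂.integrable one_le_two
  set F₁ : ℝ → ℝ := (Set.Ico (0:ℝ) t).indicator f₁ with hF₁def
  set F₂ : ℝ → ℝ := (Set.Ico (0:ℝ) t).indicator f₂ with hF₂def
  have hF₁ : Integrable F₁ volume := hi₁.integrable_indicator measurableSet_Ico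
  have hF₂ : Integrable F₂ volume := hi₂.integrable_indicator measurableSet_Ico
  set u : ℝ → ℝ := fun s => ∫ τ in (0:ℝ)..s, F₁ τ with hudef
  set v : ℝ → ℝ := fun s => ∫ τ in (0:ℝ)..s, F₂ τ with hvdef
  have hu : Continuous u := hF₁.continuous_primitive 0
  have hv : Continuous v := hF₂.continuous_primitive 0
  have hne : ∀ᵐ x : ℝ, x ≠ t := by
    rw [ae_iff]
    simpa using measure_singleton t
  -- replacing f by its indicator version in interval integrals inside [0,t]
  have hcong : ∀ g : ℝ → ℝ, ∀ a b : ℝ, 0 ≤ a → a ≤ b → b ≤ t →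
      (∫ τ in a..b, g τ) = ∫ τ in a..b, (Set.Ico (0:ℝ) t).indicator g τ := by
    intro g a b ha hab hbt
    refine intervalIntegral.integral_congr_ae ?_
    filter_upwards [hne] with x hx hxmem
    rw [Set.uIoc_of_le hab] at hxmem
    have hm : x ∈ Set.Ico (0:ℝ) t :=
      ⟨le_of_lt (lt_of_le_of_lt ha hxmem.1), lt_of_le_of_ne (hxmem.2.trans hbt) hx⟩
    rw [Set.indicator_of_mem hm]
  have hsplit : ∀ g : ℝ → ℝ, Integrable g volume → ∀ s : ℝ,
      (∫ τ in s..t, g τ) = (∫ τ in (0:ℝ)..t, g τ) - ∫ τ in (0:ℝ)..s, g τ := by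
    intro g hg s
    rw [eq_sub_iff_add_eq']
    exact intervalIntegral.integral_add_adjacent_intervals
      hg.intervalIntegrable hg.intervalIntegrable
  have heq1' := (ae_restrict_iff' measurableSet_Ico).1 heq1
  have heq2' := (ae_restrict_iff' measurableSet_Ico).1 heq2
  have hae1 : ∀ᵐ s : ℝ, s ∈ Set.Ico (0:ℝ) t → f₁ s = k * (2 * v s - v t) := by
    filter_upwards [heq1'] with s hs hsmem
    have h0s : (0:ℝ) ≤ s := hsmem.1
    have hst : s ≤ t := hsmem.2.le
    have e1 : (∫ τ in (0:ℝ)..s, f₂ τ) = v s := (hcong f₂ 0 s le_rfl h0s hst)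
    have e2 : (∫ τ in s..t, f₂ τ) = v t - v s := by
      rw [hcong f₂ s t h0s hst le_rfl]
      exact hsplit F₂ hF₂ s
    rw [hs hsmem, e1, e2]; ring
  have hae2 : ∀ᵐ s : ℝ, s ∈ Set.Ico (0:ℝ) t → f₂ s = k * (u t - 2 * u s) := by
    filter_upwards [heq2'] with s hs hsmem
    have h0s : (0:ℝ) ≤ s := hsmem.1
    have hst : s ≤ t := hsmem.2.le
    have e1 : (∫ τ in (0:ℝ)..s, f₁ τ) = u s := (hcong f₁ 0 s le_rfl h0s hst)
    have e2 : (∫ τ in s..t, f₁ τ) = u t - u s := by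
      rw [hcong f₁ s t h0s hst le_rfl]
      exact hsplit F₁ hF₁ s
    rw [hs hsmem, e1, e2]; ring
  have hprim : ∀ (g G : ℝ → ℝ), (∀ᵐ x : ℝ, x ∈ Set.Ico (0:ℝ) t → g x = G x) →
      ∀ s ∈ Set.Icc (0:ℝ) t, (∫ τ in (0:ℝ)..s, g τ) = ∫ τ in (0:ℝ)..s, G τ := by
    intro g G hgG s hs
    refine intervalIntegral.integral_congr_ae ?_
    filter_upwards [hne, hgG] with x hx hxg hxmem
    rw [Set.uIoc_of_le hs.1] at hxmem
    exact hxg ⟨hxmem.1.le, lt_of_le_of_ne (hxmem.2.trans hs.2) hx⟩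
  have haeF1 : ∀ᵐ x : ℝ, x ∈ Set.Ico (0:ℝ) t → F₁ x = k * (2 * v x - v t) := by
    filter_upwards [hae1] with x hx hxmem
    rw [hF₁def, Set.indicator_of_mem hxmem]
    exact hx hxmem
  have haeF2 : ∀ᵐ x : ℝ, x ∈ Set.Ico (0:ℝ) t → F₂ x = k * (u t - 2 * u x) := by
    filter_upwards [hae2] with x hx hxmem
    rw [hF₂def, Set.indicator_of_mem hxmem]
    exact hx hxmem
  have huU : ∀ s ∈ Set.Icc (0:ℝ) t, u s = (∫ τ in (0:ℝ)..s, k * (2 * v τ - v t)) :=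
    fun s hs => hprim F₁ _ haeF1 s hs
  have hvV : ∀ s ∈ Set.Icc (0:ℝ) t, v s = (∫ τ in (0:ℝ)..s, k * (u t - 2 * u τ)) :=
    fun s hs => hprim F₂ _ haeF2 s hs
  have hvanish : ∀ x ∈ Set.Icc (0:ℝ) t, u x = 0 ∧ v x = 0 := by
    -- derivative building blocks
    have hh₁ : Continuous fun s : ℝ => k * (2 * v s - (v t)) := by fun_prop
    have hh₂ : Continuous fun s : ℝ => k * ((u t) - 2 * u s) := by fun_prop
    set U : ℝ → ℝ := fun s => ∫ τ in (0:ℝ)..s, k * (2 * v τ - (v t)) with hUdef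
    set V : ℝ → ℝ := fun s => ∫ τ in (0:ℝ)..s, k * ((u t) - 2 * u τ) with hVdef
    have hUd : ∀ s : ℝ, HasDerivAt U (k * (2 * v s - (v t))) s := fun s =>
      (hh₁.integral_hasStrictDerivAt 0 s).hasDerivAt
    have hVd : ∀ s : ℝ, HasDerivAt V (k * ((u t) - 2 * u s)) s := fun s =>
      (hh₂.integral_hasStrictDerivAt 0 s).hasDerivAt
    have hUc : Continuous U := intervalIntegral.continuous_primitive
      (fun a b => hh₁.intervalIntegrable a b) 0
    set Z : ℝ → ℂ := fun s => (↑(U s - (u t)/2) + ↑(V s - (v t)/2) * Complex.I) with hZdef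
    have hZd : ∀ s : ℝ, HasDerivAt Z
        ((↑(k * (2 * v s - (v t))) : ℂ) + ↑(k * ((u t) - 2 * u s)) * Complex.I) s := by
      intro s
      exact (((hUd s).sub_const ((u t)/2)).ofReal_comp).add
        ((((hVd s).sub_const ((v t)/2)).ofReal_comp).mul_const Complex.I)
    set E : ℝ → ℂ := fun s => Complex.exp (↑(2*k*s) * Complex.I) with hEdef
    have hEd : ∀ s : ℝ, HasDerivAt E (Complex.exp (↑(2*k*s) * Complex.I) * (↑(2*k) * Complex.I)) s := by
      intro s
      have h0 : HasDerivAt (fun s : ℝ => (2*k*s : ℝ)) (2*k) s := by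
        simpa [mul_comm] using (hasDerivAt_id s).const_mul (2*k)
      exact (h0.ofReal_comp.mul_const Complex.I).cexp
    set W : ℝ → ℂ := fun s => E s * Z s with hWdef
    have hWd : ∀ s ∈ Set.Icc (0:ℝ) t, u s = U s → v s = V s → HasDerivAt W 0 s := by
      intro s hs huU hvV
      have := (hEd s).fun_mul (hZd s)
      rw [huU, hvV] at this
      convert this using 1
      · rfl
      simp only [hZdef, hEdef]
      push_cast
      linear_combination (-(↑k * Complex.exp ((2*↑k*↑s) * Complex.I) * (2*((V s : ℂ)) - ((v t):ℂ)))) * Complex.I_sq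
    have hVc : Continuous V := intervalIntegral.continuous_primitive
      (fun a b => hh₂.intervalIntegrable a b) 0
    have hWc : Continuous W := by
      apply Continuous.mul
      · exact Complex.continuous_exp.comp ((Complex.continuous_ofReal.comp (by fun_prop)).mul continuous_const)
      · fun_prop
    have htIcc : t ∈ Set.Icc (0:ℝ) t := ⟨ht.le, le_rfl⟩
    have hUt : U t = (u t) := (huU t htIcc).symm
    have hVt : V t = (v t) := (hvV t htIcc).symm
    have hconst : ∀ x ∈ Set.Icc (0:ℝ) t, W x = W 0 := by
      refine constant_of_has_deriv_right_zero hWc.continuousOn (fun x hx => ?_)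
      have hx' : x ∈ Set.Icc (0:ℝ) t := ⟨hx.1, hx.2.le⟩
      exact (hWd x hx' (huU x hx') (hvV x hx')).hasDerivWithinAt
    have hU0 : U 0 = 0 := intervalIntegral.integral_same
    have hV0 : V 0 = 0 := intervalIntegral.integral_same
    have hexp : Complex.exp ((2*(k:ℂ)*(t:ℂ)) * Complex.I) ≠ -1 := by
      intro hcontra
      have h1 : Complex.exp ((2*(k:ℂ)*(t:ℂ)) * Complex.I + (Real.pi:ℂ) * Complex.I) = 1 := by
        rw [Complex.exp_add, hcontra, Complex.exp_pi_mul_I]; norm_num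
      rw [Complex.exp_eq_one_iff] at h1
      obtain ⟨n, hn⟩ := h1
      have him := congrArg Complex.im hn
      simp at him
      apply hres (n-1)
      have hπ := Real.pi_ne_zero
      push_cast
      field_simp
      linarith
    have hfac : ((Complex.exp ((2*(k:ℂ)*(t:ℂ)) * Complex.I)) + 1) * (↑((u t)/2) + ↑((v t)/2) * Complex.I) = 0 := by
      have hWt := hconst t htIcc
      simp only [hWdef, hEdef, hZdef, hUt, hVt, hU0, hV0] at hWt
      push_cast at hWt ⊢
      rw [show ((2:ℂ)*(k:ℂ)*0*Complex.I) = 0 by ring, Complex.exp_zero] at hWt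
      linear_combination hWt
    have hX : (↑((u t)/2) + ↑((v t)/2) * Complex.I : ℂ) = 0 := by
      rcases mul_eq_zero.1 hfac with h | h
      · exact absurd (by linear_combination h) hexp
      · exact h
    have hA0 : (u t) = 0 := by
      have := congrArg Complex.re hX
      simp at this
      linarith
    have hB0 : (v t) = 0 := by
      have := congrArg Complex.im hX
      simp at this
      linarith
    intro x hx
    have hWx := hconst x hx
    have hW0 : W 0 = 0 := by
      simp [hWdef, hEdef, hZdef, hU0, hV0, hA0, hB0]
    rw [hW0] at hWx
    have hZx : Z x = 0 := by
      have := mul_eq_zero.1 hWx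
      rcases this with h | h
      · exact absurd h (Complex.exp_ne_zero _)
      · exact h
    have hUx : U x = 0 := by
      have := congrArg Complex.re hZx
      simp [hZdef] at this
      linarith [hA0 ▸ this]
    have hVx : V x = 0 := by
      have := congrArg Complex.im hZx
      simp [hZdef] at this
      linarith [hB0 ▸ this]
    exact ⟨by rw [huU x hx]; exact hUx, by rw [hvV x hx]; exact hVx⟩
  constructor
  · rw [ae_restrict_iff' measurableSet_Ico]
    filter_upwards [hae1] with s hs hsmem
    rw [hs hsmem, (hvanish s ⟨hsmem.1, hsmem.2.le⟩).2, (hvanish t ⟨ht.le, le_rfl⟩).2]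
    ring
  · rw [ae_restrict_iff' measurableSet_Ico]
    filter_upwards [hae2] with s hs hsmem
    rw [hs hsmem, (hvanish s ⟨hsmem.1, hsmem.2.le⟩).1, (hvanish t ⟨ht.le, le_rfl⟩).1]
    ring
end
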